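/- For every positive integer n, 16·T(1,1,6;n) = N(1,1,6;4(8n+8)) − N(1,1,6;8n+8). -/
import Mathlib

/-- Number of representations of `n` as `a*x^2 + b*y^2 + c*z^2` with `x,y,z : ℤ`. -/
noncomputable def N (a b c n : ℕ) : ℕ :=
  Nat.card {p : ℤ × ℤ × ℤ //
    (a : ℤ) * p.1 ^ 2 + (b : ℤ) * p.2.1 ^ 2 + (c : ℤ) * p.2.2 ^ 2 = (n : ℤ)}

/-- Number of representations of `n` as `a*x(x+1)/2 + b*y(y+1)/2 + c*z(z+1)/2` with `x,y,z : ℕ`. -/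
noncomputable def T (a b c n : ℕ) : ℕ :=
  Nat.card {p : ℕ × ℕ × ℕ //
    a * (p.1 * (p.1 + 1) / 2) + b * (p.2.1 * (p.2.1 + 1) / 2)
      + c * (p.2.2 * (p.2.2 + 1) / 2) = n}

namespace Stmt2Aux

def Qf (p : ℤ × ℤ × ℤ) : ℤ := p.1 ^ 2 + p.2.1 ^ 2 + 6 * p.2.2 ^ 2

def Op (p : ℤ × ℤ × ℤ) : Prop := Odd p.1 ∧ Odd p.2.1 ∧ Odd p.2.2

lemma finQset (M : ℤ) : {p : ℤ × ℤ × ℤ | Qf p = M}.Finite := by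
  apply Set.Finite.subset (Set.finite_Icc ((-M, -M, -M) : ℤ × ℤ × ℤ) (M, M, M))
  rintro ⟨x, y, z⟩ h
  simp only [Set.mem_setOf_eq, Qf] at h
  have h1 : 2*x ≤ M + 1 := by nlinarith [sq_nonneg (x-1), sq_nonneg y, sq_nonneg z]
  have h2 : -(2*x) ≤ M + 1 := by nlinarith [sq_nonneg (x+1), sq_nonneg y, sq_nonneg z]
  have h3 : 2*y ≤ M + 1 := by nlinarith [sq_nonneg (y-1), sq_nonneg x, sq_nonneg z]
  have h4 : -(2*y) ≤ M + 1 := by nlinarith [sq_nonneg (y+1), sq_nonneg x, sq_nonneg z]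
  have h5 : 2*z ≤ M + 1 := by nlinarith [sq_nonneg (z-1), sq_nonneg x, sq_nonneg y]
  have h6 : -(2*z) ≤ M + 1 := by nlinarith [sq_nonneg (z+1), sq_nonneg x, sq_nonneg y]
  have hM : 0 ≤ M := by nlinarith [sq_nonneg x, sq_nonneg y, sq_nonneg z]
  simp only [Set.mem_Icc, Prod.mk_le_mk]
  omega

instance instFin1 (M : ℤ) : Finite {p : ℤ × ℤ × ℤ // Qf p = M} :=
  (finQset M).to_subtype

instance instFin2 (M : ℤ) : Finite {p : ℤ × ℤ × ℤ // Qf p = M ∧ Op p} :=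
  Set.Finite.to_subtype <| (finQset M).subset (fun _ hp => hp.1)

lemma N_card (M : ℕ) : N 1 1 6 M = Nat.card {p : ℤ × ℤ × ℤ // Qf p = (M : ℤ)} := by
  apply Nat.card_congr
  apply Equiv.subtypeEquivRight
  intro p
  unfold Qf
  push_cast
  constructor <;> intro h <;> linarith

/-- linearize a square mod 8 -/
lemma sqlin (x : ℤ) :
    ∃ a u, (x = 2*a ∧ x^2 = 8*u - 4*a) ∨ (x = 2*a + 1 ∧ x^2 = 8*u + 1) := by
  rcases Int.even_or_odd x with ⟨a, ha⟩ | ⟨a, ha⟩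
  · obtain ⟨u, hu⟩ := Int.even_mul_succ_self a
    exact ⟨a, u, Or.inl ⟨by omega, by rw [ha]; linear_combination 4*hu⟩⟩
  · obtain ⟨u, hu⟩ := Int.even_mul_succ_self a
    exact ⟨a, u, Or.inr ⟨ha, by rw [ha]; linear_combination 4*hu⟩⟩

lemma parity (x y z : ℤ) (h : (8:ℤ) ∣ x^2 + y^2 + 6*z^2) :
    (Even x ∧ Even y ∧ Even z) ∨ (Odd x ∧ Odd y ∧ Odd z) := by
  obtain ⟨a, u, hx⟩ := sqlin x
  obtain ⟨b, v, hy⟩ := sqlin y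
  obtain ⟨c, w, hz⟩ := sqlin z
  rw [Int.even_iff, Int.even_iff, Int.even_iff, Int.odd_iff, Int.odd_iff, Int.odd_iff]
  rcases hx with ⟨hx1, hx2⟩ | ⟨hx1, hx2⟩ <;>
    rcases hy with ⟨hy1, hy2⟩ | ⟨hy1, hy2⟩ <;>
      rcases hz with ⟨hz1, hz2⟩ | ⟨hz1, hz2⟩ <;>
        rw [hx2, hy2, hz2] at h <;> omega

/-- the mod 8 kernel fact -/
lemma core8 : ∀ a b c : ZMod 8, a^2+a+b^2+b+6*c^2+6*c+2 = 0 → 2*a+2*b+12*c+4 = 0 →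
    (3*a-b-6*c-6 = 0 ∧ -a+3*b-6*c-6 = 0 ∧ a+b-6*c-2 = 0) := by decide

lemma coreZ (X Y Z : ℤ) (hX : Odd X) (hY : Odd Y) (hZ : Odd Z)
    (hq : (32:ℤ) ∣ X^2 + Y^2 + 6*Z^2) (h8 : (8:ℤ) ∣ X + Y + 6*Z - 4) :
    (16:ℤ) ∣ 3*X - Y - 6*Z - 8 ∧ (16:ℤ) ∣ -X + 3*Y - 6*Z - 8 ∧ (16:ℤ) ∣ X + Y - 6*Z := by
  obtain ⟨a, ha⟩ := hX
  obtain ⟨b, hb⟩ := hY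
  obtain ⟨c, hc⟩ := hZ
  subst ha hb hc
  obtain ⟨k, hk⟩ := hq
  have hq' : (8:ℤ) ∣ a^2+a+b^2+b+6*c^2+6*c+2 := by
    have e : 4*(a^2+a+b^2+b+6*c^2+6*c+2) = 32*k := by linear_combination hk
    exact ⟨k, by linarith⟩
  have hl' : (8:ℤ) ∣ 2*a+2*b+12*c+4 := by
    obtain ⟨t, ht⟩ := h8
    exact ⟨t, by linarith⟩
  have H1 : ((a^2+a+b^2+b+6*c^2+6*c+2 : ℤ) : ZMod 8) = 0 :=
    (ZMod.intCast_zmod_eq_zero_iff_dvd _ 8).mpr hq'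
  have H2 : ((2*a+2*b+12*c+4 : ℤ) : ZMod 8) = 0 :=
    (ZMod.intCast_zmod_eq_zero_iff_dvd _ 8).mpr hl'
  push_cast at H1 H2
  obtain ⟨C1, C2, C3⟩ := core8 (a : ZMod 8) (b : ZMod 8) (c : ZMod 8) H1 H2
  have D1 : (8:ℤ) ∣ 3*a - b - 6*c - 6 := by
    have : ((3*a - b - 6*c - 6 : ℤ) : ZMod 8) = 0 := by push_cast; linear_combination C1
    exact (ZMod.intCast_zmod_eq_zero_iff_dvd _ 8).mp this
  have D2 : (8:ℤ) ∣ -a + 3*b - 6*c - 6 := by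
    have : ((-a + 3*b - 6*c - 6 : ℤ) : ZMod 8) = 0 := by push_cast; linear_combination C2
    exact (ZMod.intCast_zmod_eq_zero_iff_dvd _ 8).mp this
  have D3 : (8:ℤ) ∣ a + b - 6*c - 2 := by
    have : ((a + b - 6*c - 2 : ℤ) : ZMod 8) = 0 := by push_cast; linear_combination C3
    exact (ZMod.intCast_zmod_eq_zero_iff_dvd _ 8).mp this
  refine ⟨?_, ?_, ?_⟩ <;> omega



def splitF (n : ℕ) :
    ({p : ℤ × ℤ × ℤ // Qf p = 8*(n:ℤ)+8} ⊕ {p : ℤ × ℤ × ℤ // Qf p = 32*(n:ℤ)+32 ∧ Op p}) →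
    {p : ℤ × ℤ × ℤ // Qf p = 32*(n:ℤ)+32}
  | .inl ⟨p, h⟩ => ⟨(2*p.1, 2*p.2.1, 2*p.2.2), by unfold Qf at h ⊢; dsimp only; linear_combination 4*h⟩
  | .inr ⟨p, h⟩ => ⟨p, h.1⟩

lemma splitF_bij (n : ℕ) : Function.Bijective (splitF n) := by
  constructor
  · rintro (⟨⟨x,y,z⟩, h⟩ | ⟨⟨x,y,z⟩, h⟩) (⟨⟨x',y',z'⟩, h'⟩ | ⟨⟨x',y',z'⟩, h'⟩) hab <;>
      simp only [splitF, Subtype.mk.injEq, Prod.mk.injEq] at hab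
    · simp only [Sum.inl.injEq, Subtype.mk.injEq, Prod.mk.injEq]; omega
    · exfalso
      have h2 := h'.2.1
      rw [Int.odd_iff] at h2
      omega
    · exfalso
      have h2 := h.2.1
      rw [Int.odd_iff] at h2
      omega
    · simp only [Sum.inr.injEq, Subtype.mk.injEq, Prod.mk.injEq]; exact hab
  · rintro ⟨⟨x,y,z⟩, h⟩
    unfold Qf at h; dsimp only at h
    have h8 : (8:ℤ) ∣ x^2+y^2+6*z^2 := ⟨4*(n:ℤ)+4, by linarith⟩
    rcases parity x y z h8 with ⟨⟨a,ha⟩,⟨b,hb⟩,⟨c,hc⟩⟩ | ho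
    · have e : 4*(a^2+b^2+6*c^2) = 4*(8*(n:ℤ)+8) := by rw [ha, hb, hc] at h; linear_combination h
      refine ⟨.inl ⟨(a,b,c), by unfold Qf; dsimp only; linarith⟩, ?_⟩
      apply Subtype.ext
      simp only [splitF, Prod.mk.injEq]
      refine ⟨by omega, by omega, by omega⟩
    · exact ⟨.inr ⟨(x,y,z), by unfold Qf; dsimp only; linarith, ho⟩, rfl⟩

lemma card_split (n : ℕ) [Finite {p : ℤ × ℤ × ℤ // Qf p = 8*(n:ℤ)+8}]
    [Finite {p : ℤ × ℤ × ℤ // Qf p = 32*(n:ℤ)+32 ∧ Op p}] :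
    Nat.card {p : ℤ × ℤ × ℤ // Qf p = 32*(n:ℤ)+32} =
      Nat.card {p : ℤ × ℤ × ℤ // Qf p = 8*(n:ℤ)+8} +
      Nat.card {p : ℤ × ℤ × ℤ // Qf p = 32*(n:ℤ)+32 ∧ Op p} := by
  rw [← Nat.card_sum]
  exact (Nat.card_congr (Equiv.ofBijective _ (splitF_bij n))).symm

/-! T-side -/

def sgn (u : Bool) (a : ℕ) : ℤ := cond u (2*(a:ℤ)+1) (-(2*(a:ℤ)+1))

lemma sgn_sq (u : Bool) (a : ℕ) : (sgn u a)^2 = 8*((a*(a+1)/2 : ℕ) : ℤ) + 1 := by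
  obtain ⟨k, hk⟩ := Nat.even_mul_succ_self a
  have h2 : a*(a+1)/2 = k := by omega
  have hk' : (a:ℤ)*((a:ℤ)+1) = (k:ℤ) + (k:ℤ) := by exact_mod_cast hk
  rw [h2]
  cases u <;> simp only [sgn, cond] <;> linear_combination 4*hk'

lemma sgn_odd (u : Bool) (a : ℕ) : Odd (sgn u a) := by
  cases u
  · exact ⟨-(a:ℤ)-1, by simp only [sgn, cond]; ring⟩
  · exact ⟨(a:ℤ), by simp only [sgn, cond]⟩

lemma sgn_inj {u v : Bool} {a b : ℕ} (h : sgn u a = sgn v b) : u = v ∧ a = b := by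
  cases u <;> cases v <;> simp only [sgn, cond] at h <;> constructor <;> first | rfl | omega

lemma sgn_surj (X : ℤ) (h : Odd X) : ∃ u a, sgn u a = X := by
  rw [Int.odd_iff] at h
  rcases le_or_gt 0 X with hpos | hneg
  · exact ⟨true, ((X.toNat - 1)/2), by simp only [sgn, cond]; omega⟩
  · exact ⟨false, (((-X).toNat - 1)/2), by simp only [sgn, cond]; omega⟩

def tmapF (n : ℕ) :
    ({q : ℕ × ℕ × ℕ // 1 * (q.1 * (q.1 + 1) / 2) + 1 * (q.2.1 * (q.2.1 + 1) / 2)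
        + 6 * (q.2.2 * (q.2.2 + 1) / 2) = n} × (Bool × Bool × Bool)) →
    {p : ℤ × ℤ × ℤ // Qf p = 8*(n:ℤ)+8 ∧ Op p} := fun q =>
  ⟨(sgn q.2.1 q.1.1.1, sgn q.2.2.1 q.1.1.2.1, sgn q.2.2.2 q.1.1.2.2), by
    constructor
    · have e1 := sgn_sq q.2.1 q.1.1.1
      have e2 := sgn_sq q.2.2.1 q.1.1.2.1
      have e3 := sgn_sq q.2.2.2 q.1.1.2.2
      have h := q.1.2
      unfold Qf
      dsimp only
      rw [e1, e2, e3]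
      omega
    · exact ⟨sgn_odd _ _, sgn_odd _ _, sgn_odd _ _⟩⟩

lemma tmapF_bij (n : ℕ) : Function.Bijective (tmapF n) := by
  constructor
  · rintro ⟨⟨⟨a,b,c⟩, h⟩, ⟨u,v,w⟩⟩ ⟨⟨⟨a',b',c'⟩, h'⟩, ⟨u',v',w'⟩⟩ heq
    simp only [tmapF, Subtype.mk.injEq, Prod.mk.injEq] at heq
    obtain ⟨e1, e2, e3⟩ := heq
    obtain ⟨g1, g2⟩ := sgn_inj e1
    obtain ⟨g3, g4⟩ := sgn_inj e2
    obtain ⟨g5, g6⟩ := sgn_inj e3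
    subst g1 g2 g3 g4 g5 g6
    rfl
  · rintro ⟨⟨X,Y,Z⟩, hQ, hX, hY, hZ⟩
    obtain ⟨u, a, hu⟩ := sgn_surj X hX
    obtain ⟨v, b, hv⟩ := sgn_surj Y hY
    obtain ⟨w, c, hw⟩ := sgn_surj Z hZ
    unfold Qf at hQ; dsimp only at hQ
    have e1 := sgn_sq u a; rw [hu] at e1
    have e2 := sgn_sq v b; rw [hv] at e2
    have e3 := sgn_sq w c; rw [hw] at e3
    have heq : 1 * (a * (a + 1) / 2) + 1 * (b * (b + 1) / 2) + 6 * (c * (c + 1) / 2) = n := by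
      rw [e1, e2, e3] at hQ; omega
    exact ⟨⟨⟨(a,b,c), heq⟩, (u,v,w)⟩, Subtype.ext (by
      simp only [tmapF, Prod.mk.injEq]; exact ⟨hu, hv, hw⟩)⟩


/-- the half-reflection -/
def grs (x y z : ℤ) (b : Bool) : ℤ :=
  (x + (if (x+y) % 4 = 0 then 1 else -1) * y + 6 * (cond b (1:ℤ) (-1)) * z) / 2

lemma gr_wd (n : ℕ) (x y z : ℤ) (b : Bool) (hx : Odd x) (hy : Odd y) (hz : Odd z)
    (hQ : x^2 + y^2 + 6*z^2 = 8*(n:ℤ)+8) :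
    (2*x - grs x y z b)^2 + (2*y - (if (x+y) % 4 = 0 then (1:ℤ) else -1) * grs x y z b)^2
      + 6*(2*z - (cond b (1:ℤ) (-1)) * grs x y z b)^2 = 32*(n:ℤ)+32 ∧
    Odd (2*x - grs x y z b) ∧
    Odd (2*y - (if (x+y) % 4 = 0 then (1:ℤ) else -1) * grs x y z b) ∧
    Odd (2*z - (cond b (1:ℤ) (-1)) * grs x y z b) := by
  rw [Int.odd_iff] at hx hy hz
  rw [Int.odd_iff, Int.odd_iff, Int.odd_iff]
  cases b <;> by_cases h4 : (x+y) % 4 = 0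
  · simp only [grs, cond, if_pos h4]
    have hs : 2*((x + 1 * y + 6 * (-1:ℤ) * z)/2) = x + 1*y + 6 * (-1:ℤ) * z := by omega
    refine ⟨by linear_combination 4*hQ + 4*((x + 1 * y + 6 * (-1:ℤ) * z)/2)*hs, by omega, by omega, by omega⟩
  · simp only [grs, cond, if_neg h4]
    have hs : 2*((x + (-1) * y + 6 * (-1:ℤ) * z)/2) = x + (-1)*y + 6 * (-1:ℤ) * z := by omega
    refine ⟨by linear_combination 4*hQ + 4*((x + (-1) * y + 6 * (-1:ℤ) * z)/2)*hs, by omega, by omega, by omega⟩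
  · simp only [grs, cond, if_pos h4]
    have hs : 2*((x + 1 * y + 6 * (1:ℤ) * z)/2) = x + 1*y + 6 * (1:ℤ) * z := by omega
    refine ⟨by linear_combination 4*hQ + 4*((x + 1 * y + 6 * (1:ℤ) * z)/2)*hs, by omega, by omega, by omega⟩
  · simp only [grs, cond, if_neg h4]
    have hs : 2*((x + (-1) * y + 6 * (1:ℤ) * z)/2) = x + (-1)*y + 6 * (1:ℤ) * z := by omega
    refine ⟨by linear_combination 4*hQ + 4*((x + (-1) * y + 6 * (1:ℤ) * z)/2)*hs, by omega, by omega, by omega⟩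


def grF (n : ℕ) : ({p : ℤ × ℤ × ℤ // Qf p = 8*(n:ℤ)+8 ∧ Op p} × Bool) →
    {p : ℤ × ℤ × ℤ // Qf p = 32*(n:ℤ)+32 ∧ Op p} := fun q =>
  ⟨(2*q.1.1.1 - grs q.1.1.1 q.1.1.2.1 q.1.1.2.2 q.2,
    2*q.1.1.2.1 - (if (q.1.1.1 + q.1.1.2.1) % 4 = 0 then (1:ℤ) else -1)
        * grs q.1.1.1 q.1.1.2.1 q.1.1.2.2 q.2,
    2*q.1.1.2.2 - (cond q.2 (1:ℤ) (-1)) * grs q.1.1.1 q.1.1.2.1 q.1.1.2.2 q.2), by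
    have hQ := q.1.2.1
    have hop := q.1.2.2
    unfold Qf at hQ ⊢
    obtain ⟨h1, h2, h3, h4⟩ := gr_wd n q.1.1.1 q.1.1.2.1 q.1.1.2.2 q.2 hop.1 hop.2.1 hop.2.2 hQ
    exact ⟨h1, h2, h3, h4⟩⟩

set_option maxHeartbeats 2000000 in
lemma grF_inj (n : ℕ) : Function.Injective (grF n) := by
  rintro ⟨⟨⟨x,y,z⟩, hQ, hx, hy, hz⟩, b⟩ ⟨⟨⟨x',y',z'⟩, hQ', hx', hy', hz'⟩, b'⟩ heq
  dsimp only at hQ hx hy hz hQ' hx' hy' hz'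
  rw [Int.odd_iff] at hx hy hz hx' hy' hz'
  cases b <;> cases b' <;> by_cases h1 : (x+y) % 4 = 0 <;> by_cases h2 : (x'+y') % 4 = 0 <;>
    simp only [grF, grs, h1, h2, Bool.cond_true, Bool.cond_false, reduceIte,
      Subtype.mk.injEq, Prod.mk.injEq] at heq <;>
    simp only [Prod.mk.injEq, Subtype.mk.injEq, and_true, true_and] <;>
    omega

lemma branch1 (n : ℕ) (X Y Z : ℤ) (hXo : Odd X) (hYo : Odd Y) (hZo : Odd Z)
    (hQe : X^2 + Y^2 + 6*Z^2 = 32*(n:ℤ)+32) (hm : (8:ℤ) ∣ X + Y + 6*Z - 4) :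
    ∃ x y z s : ℤ, Odd x ∧ Odd y ∧ Odd z ∧ Odd s ∧ x^2+y^2+6*z^2 = 8*(n:ℤ)+8 ∧
      2*x = X - s ∧ 2*y = Y - s ∧ 2*z = Z - s ∧ 4*s = X + Y + 6*Z ∧ (4:ℤ) ∣ s - 3*Z := by
  obtain ⟨D1, D2, D3⟩ := coreZ X Y Z hXo hYo hZo ⟨(n:ℤ)+1, by linarith⟩ hm
  rw [Int.odd_iff] at hXo hYo hZo
  have h4s : 4*((X + Y + 6*Z)/4) = X + Y + 6*Z := by omega
  set s := (X + Y + 6*Z)/4 with hsdef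
  have h2x : 2*((X - s)/2) = X - s := by omega
  have h2y : 2*((Y - s)/2) = Y - s := by omega
  have h2z : 2*((Z - s)/2) = Z - s := by omega
  refine ⟨(X-s)/2, (Y-s)/2, (Z-s)/2, s, ?_, ?_, ?_, ?_, ?_, h2x, h2y, h2z, h4s, ?_⟩
  · rw [Int.odd_iff]; omega
  · rw [Int.odd_iff]; omega
  · rw [Int.odd_iff]; omega
  · rw [Int.odd_iff]; omega
  · have e1 : (2*((X-s)/2))^2 = (X-s)^2 := by rw [h2x]
    have e2 : (2*((Y-s)/2))^2 = (Y-s)^2 := by rw [h2y]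
    have e3 : (2*((Z-s)/2))^2 = (Z-s)^2 := by rw [h2z]
    have e4 : 4*(((X-s)/2)^2 + ((Y-s)/2)^2 + 6*((Z-s)/2)^2) = 4*(8*(n:ℤ)+8) := by
      linear_combination e1 + e2 + 6*e3 + hQe + 2*s*h4s
    linarith
  · omega



set_option maxHeartbeats 2000000 in
lemma grF_surj (n : ℕ) : Function.Surjective (grF n) := by
  rintro ⟨⟨X,Y,Z⟩, hQ, hX, hY, hZ⟩
  dsimp only at hQ hX hY hZ
  unfold Qf at hQ
  dsimp only at hQ
  have hXm := Int.odd_iff.mp hX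
  have hYm := Int.odd_iff.mp hY
  have hZm := Int.odd_iff.mp hZ
  have hYn : Odd (-Y) := by obtain ⟨k, hk⟩ := hY; exact ⟨-k-1, by omega⟩
  have hZn : Odd (-Z) := by obtain ⟨k, hk⟩ := hZ; exact ⟨-k-1, by omega⟩
  have hdisj : (X+Y+6*Z-4) % 8 = 0 ∨ (X+Y-6*Z-4) % 8 = 0 ∨
      (X-Y+6*Z-4) % 8 = 0 ∨ (X-Y-6*Z-4) % 8 = 0 := by omega
  rcases hdisj with h | h | h | h
  · -- ε = 1, δ = 1
    obtain ⟨x,y,z,s,hox,hoy,hoz,hos,hq8,h2x,h2y,h2z,h4s,hdvd⟩ :=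
      branch1 n X Y Z hX hY hZ hQ ⟨(X+Y+6*Z-4)/8, by omega⟩
    have hoxm := Int.odd_iff.mp hox; have hoym := Int.odd_iff.mp hoy
    have hozm := Int.odd_iff.mp hoz; have hosm := Int.odd_iff.mp hos
    refine ⟨⟨⟨(x,y,z), ⟨by unfold Qf; dsimp only; exact hq8, hox, hoy, hoz⟩⟩, true⟩, ?_⟩
    apply Subtype.ext
    have hif : (x + y) % 4 = 0 := by omega
    simp only [grF, grs, Bool.cond_true, hif, reduceIte, Prod.mk.injEq]
    refine ⟨by omega, by omega, by omega⟩
  · -- ε = 1, δ = -1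
    obtain ⟨x,y,z1,s,hox,hoy,hoz,hos,hq8,h2x,h2y,h2z,h4s,hdvd⟩ :=
      branch1 n X Y (-Z) hX hY hZn (by linear_combination hQ) ⟨(X+Y-6*Z-4)/8, by omega⟩
    have hoxm := Int.odd_iff.mp hox; have hoym := Int.odd_iff.mp hoy
    have hozm := Int.odd_iff.mp hoz; have hosm := Int.odd_iff.mp hos
    have hoz' : Odd (-z1) := by obtain ⟨k, hk⟩ := hoz; exact ⟨-k-1, by omega⟩
    refine ⟨⟨⟨(x,y,-z1), ⟨by unfold Qf; dsimp only; linear_combination hq8, hox, hoy, hoz'⟩⟩,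
      false⟩, ?_⟩
    apply Subtype.ext
    have hif : (x + y) % 4 = 0 := by omega
    simp only [grF, grs, Bool.cond_false, hif, reduceIte, Prod.mk.injEq]
    refine ⟨by omega, by omega, by omega⟩
  · -- ε = -1, δ = 1
    obtain ⟨x,y1,z,s,hox,hoy,hoz,hos,hq8,h2x,h2y,h2z,h4s,hdvd⟩ :=
      branch1 n X (-Y) Z hX hYn hZ (by linear_combination hQ) ⟨(X-Y+6*Z-4)/8, by omega⟩
    have hoxm := Int.odd_iff.mp hox; have hoym := Int.odd_iff.mp hoy
    have hozm := Int.odd_iff.mp hoz; have hosm := Int.odd_iff.mp hos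
    have hoy' : Odd (-y1) := by obtain ⟨k, hk⟩ := hoy; exact ⟨-k-1, by omega⟩
    refine ⟨⟨⟨(x,-y1,z), ⟨by unfold Qf; dsimp only; linear_combination hq8, hox, hoy', hoz⟩⟩,
      true⟩, ?_⟩
    apply Subtype.ext
    have hif : ¬((x + -y1) % 4 = 0) := by omega
    simp only [grF, grs, Bool.cond_true, hif, reduceIte, Prod.mk.injEq]
    refine ⟨by omega, by omega, by omega⟩
  · -- ε = -1, δ = -1
    obtain ⟨x,y1,z1,s,hox,hoy,hoz,hos,hq8,h2x,h2y,h2z,h4s,hdvd⟩ :=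
      branch1 n X (-Y) (-Z) hX hYn hZn (by linear_combination hQ) ⟨(X-Y-6*Z-4)/8, by omega⟩
    have hoxm := Int.odd_iff.mp hox; have hoym := Int.odd_iff.mp hoy
    have hozm := Int.odd_iff.mp hoz; have hosm := Int.odd_iff.mp hos
    have hoy' : Odd (-y1) := by obtain ⟨k, hk⟩ := hoy; exact ⟨-k-1, by omega⟩
    have hoz' : Odd (-z1) := by obtain ⟨k, hk⟩ := hoz; exact ⟨-k-1, by omega⟩
    refine ⟨⟨⟨(x,-y1,-z1), ⟨by unfold Qf; dsimp only; linear_combination hq8, hox, hoy', hoz'⟩⟩,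
      false⟩, ?_⟩
    apply Subtype.ext
    have hif : ¬((x + -y1) % 4 = 0) := by omega
    simp only [grF, grs, Bool.cond_false, hif, reduceIte, Prod.mk.injEq]
    refine ⟨by omega, by omega, by omega⟩

lemma card_double (n : ℕ) :
    Nat.card {p : ℤ × ℤ × ℤ // Qf p = 32*(n:ℤ)+32 ∧ Op p} =
      2 * Nat.card {p : ℤ × ℤ × ℤ // Qf p = 8*(n:ℤ)+8 ∧ Op p} := by
  calc Nat.card {p : ℤ × ℤ × ℤ // Qf p = 32*(n:ℤ)+32 ∧ Op p}
      = Nat.card ({p : ℤ × ℤ × ℤ // Qf p = 8*(n:ℤ)+8 ∧ Op p} × Bool) :=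
        (Nat.card_congr (Equiv.ofBijective _ ⟨grF_inj n, grF_surj n⟩)).symm
    _ = 2 * Nat.card {p : ℤ × ℤ × ℤ // Qf p = 8*(n:ℤ)+8 ∧ Op p} := by
        rw [Nat.card_prod]
        simp [Nat.card_eq_fintype_card, Nat.mul_comm]


lemma card_S1 (n : ℕ) :
    Nat.card {p : ℤ × ℤ × ℤ // Qf p = 8*(n:ℤ)+8 ∧ Op p} = 8 * T 1 1 6 n := by
  rw [← Nat.card_congr (Equiv.ofBijective _ (tmapF_bij n)), Nat.card_prod]
  have hb : Nat.card (Bool × Bool × Bool) = 8 := by simp [Nat.card_eq_fintype_card]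
  rw [hb, Nat.mul_comm]
  rfl

end Stmt2Aux

open Stmt2Aux in
theorem stmt_2 (n : ℕ) (hn : 0 < n) :
    (16 * T 1 1 6 n : ℤ) = (N 1 1 6 (4 * (8 * n + 8)) : ℤ) - (N 1 1 6 (8 * n + 8) : ℤ) := by
  have e4 : N 1 1 6 (4*(8*n+8)) = Nat.card {p : ℤ × ℤ × ℤ // Qf p = 32*(n:ℤ)+32} := by
    rw [N_card, show ((4*(8*n+8) : ℕ) : ℤ) = 32*(n:ℤ)+32 from by push_cast; ring]
  have e1 : N 1 1 6 (8*n+8) = Nat.card {p : ℤ × ℤ × ℤ // Qf p = 8*(n:ℤ)+8} := by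
    rw [N_card, show ((8*n+8 : ℕ) : ℤ) = 8*(n:ℤ)+8 from by push_cast; ring]
  have key : N 1 1 6 (4*(8*n+8)) = N 1 1 6 (8*n+8) + 16 * T 1 1 6 n := by
    rw [e4, e1, card_split n, card_double n, card_S1 n]
    ring
  rw [key]
  push_cast
  ring
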